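/- Let k > 0, a ∈ ℝ, and ν > |a| − k. Then for every x > 0 the reverse Turán-type inequality (𝓘^k_ν(x))² − 𝓘^k_{ν−a}(x) · 𝓘^k_{ν+a}(x) ≤ 0 holds. -/
import Mathlib


open Real

/-- The k-gamma function, `Γ_k(x) = k^(x/k - 1) * Γ(x/k)`. -/
noncomputable def kGamma (k x : ℝ) : ℝ := k ^ (x / k - 1) * Real.Gamma (x / k)

/-- The normalized modified k-Bessel function `𝓘^k_ν(x) = Σ f_r(ν) x^(2r)`. -/
noncomputable def kBesselI (k ν x : ℝ) : ℝ :=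
  ∑' r : ℕ, kGamma k (ν + k) / (kGamma k (r * k + ν + k) * 4 ^ r * (r.factorial : ℝ)) *
    x ^ (2 * r)

lemma kGamma_pos {k x : ℝ} (hk : 0 < k) (hx : 0 < x) : 0 < kGamma k x :=
  mul_pos (rpow_pos_of_pos hk _) (Real.Gamma_pos_of_pos (div_pos hx hk))

lemma kGamma_add_self {k z : ℝ} (hk : 0 < k) (hz : z ≠ 0) :
    kGamma k (z + k) = z * kGamma k z := by
  unfold kGamma
  rw [add_div, div_self hk.ne', Real.Gamma_add_one (div_ne_zero hz hk.ne')]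
  rw [show z/k + 1 - 1 = (z/k - 1) + 1 by ring, Real.rpow_add hk, Real.rpow_one]
  field_simp

lemma kGamma_prod {k z : ℝ} (hk : 0 < k) (hz : 0 < z) (r : ℕ) :
    kGamma k ((r : ℝ) * k + z) = kGamma k z * ∏ j ∈ Finset.range r, ((j : ℝ) * k + z) := by
  induction r with
  | zero => simp
  | succ n ih =>
    have h1 : ((n + 1 : ℕ) : ℝ) * k + z = ((n : ℝ) * k + z) + k := by push_cast; ring
    have h2 : (n : ℝ) * k + z ≠ 0 := by positivity
    rw [h1, kGamma_add_self hk h2, ih, Finset.prod_range_succ]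
    ring

lemma arg_pos {k ν : ℝ} (hk : 0 < k) (hz : 0 < ν + k) (r : ℕ) : (0:ℝ) < ↑r * k + ν + k := by
  have := mul_nonneg (Nat.cast_nonneg r : (0:ℝ) ≤ r) hk.le
  linarith

lemma kBessel_term_pos {k ν x : ℝ} (hk : 0 < k) (hz : 0 < ν + k) (hx : 0 < x) (r : ℕ) :
    0 < kGamma k (ν + k) / (kGamma k (↑r * k + ν + k) * 4 ^ r * (r.factorial : ℝ)) *
        x ^ (2 * r) := by
  have h2 := kGamma_pos hk (arg_pos hk hz r)
  have h3 := kGamma_pos hk hz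
  positivity

lemma kBessel_summable {k ν x : ℝ} (hk : 0 < k) (hz : 0 < ν + k) (hx : 0 < x) :
    Summable (fun r : ℕ =>
      kGamma k (ν + k) / (kGamma k (↑r * k + ν + k) * 4 ^ r * (r.factorial : ℝ)) *
        x ^ (2 * r)) := by
  set f : ℕ → ℝ := fun r =>
    kGamma k (ν + k) / (kGamma k (↑r * k + ν + k) * 4 ^ r * (r.factorial : ℝ)) *
      x ^ (2 * r) with hf
  have hpos : ∀ r, 0 < f r := fun r => kBessel_term_pos hk hz hx r
  have hrec : ∀ n : ℕ, f (n + 1) = f n * (x ^ 2 / (4 * (↑n + 1) * (↑n * k + ν + k))) := by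
    intro n
    have hgrec : kGamma k (↑(n+1) * k + ν + k) = (↑n * k + ν + k) * kGamma k (↑n * k + ν + k) := by
      rw [show (↑(n+1) : ℝ) * k + ν + k = (↑n * k + ν + k) + k by push_cast; ring]
      exact kGamma_add_self hk (arg_pos hk hz n).ne'
    have h1 := kGamma_pos hk (arg_pos hk hz n)
    have hn1 : ((n+1).factorial : ℝ) = (↑n + 1) * (n.factorial : ℝ) := by
      push_cast [Nat.factorial_succ]; ring
    simp only [hf, hgrec, hn1, pow_succ]
    have h2 : (n.factorial : ℝ) ≠ 0 := Nat.cast_ne_zero.2 n.factorial_ne_zero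
    have h3 : (↑n : ℝ) + 1 ≠ 0 := by positivity
    rw [show 2 * (n+1) = 2 * n + 2 by ring, pow_add]
    field_simp
  obtain ⟨N, hN⟩ := exists_nat_ge (x ^ 2 / (2 * (ν + k)))
  apply summable_of_ratio_norm_eventually_le (r := 1/2) (by norm_num)
  filter_upwards [Filter.eventually_ge_atTop N] with n hn
  have hq : x ^ 2 / (4 * (↑n + 1) * (↑n * k + ν + k)) ≤ 1/2 := by
    rw [div_le_iff₀ (by have := arg_pos hk hz n; positivity)]
    have h1 : x ^ 2 ≤ 2 * (ν + k) * N := by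
      rw [div_le_iff₀ (by positivity)] at hN; linarith
    have h2 : (N : ℝ) ≤ n := Nat.cast_le.2 hn
    have h3 : (0:ℝ) ≤ ↑n * k := by positivity
    nlinarith [hz, h2, sq_nonneg x]
  rw [Real.norm_eq_abs, Real.norm_eq_abs, abs_of_pos (hpos _), abs_of_pos (hpos _), hrec]
  calc f n * (x ^ 2 / (4 * (↑n + 1) * (↑n * k + ν + k))) ≤ f n * (1/2) :=
        mul_le_mul_of_nonneg_left hq (hpos n).le
    _ = 1/2 * f n := by ring

lemma coeff_sq_le {k a ν : ℝ} (hk : 0 < k) (ha : |a| < ν + k) (r : ℕ) :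
    (kGamma k (ν + k) / kGamma k (↑r * k + ν + k)) ^ 2 ≤
      kGamma k (ν - a + k) / kGamma k (↑r * k + (ν - a) + k) *
        (kGamma k (ν + a + k) / kGamma k (↑r * k + (ν + a) + k)) := by
  have ha1 : a ≤ |a| := le_abs_self a
  have ha2 : -a ≤ |a| := neg_le_abs a
  have hz : 0 < ν + k := lt_of_le_of_lt (abs_nonneg a) ha
  have hzm : 0 < ν - a + k := by linarith
  have hzp : 0 < ν + a + k := by linarith
  rw [show (↑r : ℝ) * k + ν + k = ↑r * k + (ν + k) by ring,
      show (↑r : ℝ) * k + (ν - a) + k = ↑r * k + (ν - a + k) by ring,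
      show (↑r : ℝ) * k + (ν + a) + k = ↑r * k + (ν + a + k) by ring,
      kGamma_prod hk hz, kGamma_prod hk hzm, kGamma_prod hk hzp]
  have hG := kGamma_pos hk hz
  have hGm := kGamma_pos hk hzm
  have hGp := kGamma_pos hk hzp
  rw [div_mul_eq_div_div, div_self hG.ne', div_mul_eq_div_div, div_self hGm.ne',
      div_mul_eq_div_div, div_self hGp.ne']
  have hPm : (0:ℝ) < ∏ j ∈ Finset.range r, ((j : ℝ) * k + (ν - a + k)) :=
    Finset.prod_pos fun j _ => by nlinarith [mul_nonneg (Nat.cast_nonneg j : (0:ℝ) ≤ j) hk.le]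
  have hPp : (0:ℝ) < ∏ j ∈ Finset.range r, ((j : ℝ) * k + (ν + a + k)) :=
    Finset.prod_pos fun j _ => by nlinarith [mul_nonneg (Nat.cast_nonneg j : (0:ℝ) ≤ j) hk.le]
  have key : (∏ j ∈ Finset.range r, ((j : ℝ) * k + (ν - a + k))) *
      (∏ j ∈ Finset.range r, ((j : ℝ) * k + (ν + a + k))) ≤
      (∏ j ∈ Finset.range r, ((j : ℝ) * k + (ν + k))) ^ 2 := by
    rw [← Finset.prod_mul_distrib, ← Finset.prod_pow]
    refine Finset.prod_le_prod (fun j _ => ?_) fun j _ => ?_ <;>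
      nlinarith [sq_nonneg a, mul_nonneg (Nat.cast_nonneg j : (0:ℝ) ≤ j) hk.le,
        sq_nonneg ((j:ℝ) * k + ν + k)]
  rw [div_pow, one_pow, div_mul_div_comm, one_mul]
  exact one_div_le_one_div_of_le (mul_pos hPm hPp) key

theorem kBesselI_reverse_turan (k a ν : ℝ) (hk : 0 < k) (hν : |a| - k < ν) (x : ℝ)
    (hx : 0 < x) :
    kBesselI k ν x ^ 2 - kBesselI k (ν - a) x * kBesselI k (ν + a) x ≤ 0 := by
  have ha : |a| < ν + k := by linarith
  have hz : 0 < ν + k := lt_of_le_of_lt (abs_nonneg a) ha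
  have hzm : 0 < ν - a + k := by have := le_abs_self a; linarith
  have hzp : 0 < ν + a + k := by have := neg_le_abs a; linarith
  unfold kBesselI
  set t : ℕ → ℝ := fun r =>
    kGamma k (ν + k) / (kGamma k (↑r * k + ν + k) * 4 ^ r * (r.factorial : ℝ)) *
      x ^ (2 * r) with hts
  set u : ℕ → ℝ := fun r =>
    kGamma k (ν - a + k) / (kGamma k (↑r * k + (ν - a) + k) * 4 ^ r * (r.factorial : ℝ)) *
      x ^ (2 * r) with hus
  set v : ℕ → ℝ := fun r =>
    kGamma k (ν + a + k) / (kGamma k (↑r * k + (ν + a) + k) * 4 ^ r * (r.factorial : ℝ)) *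
      x ^ (2 * r) with hvs
  have hst : Summable t := kBessel_summable hk hz hx
  have hsu : Summable u := kBessel_summable hk hzm hx
  have hsv : Summable v := kBessel_summable hk hzp hx
  have htp : ∀ r, 0 < t r := kBessel_term_pos hk hz hx
  have hup : ∀ r, 0 < u r := kBessel_term_pos hk hzm hx
  have hvp : ∀ r, 0 < v r := kBessel_term_pos hk hzp hx
  have ht2 : ∀ r, t r ^ 2 ≤ u r * v r := by
    intro r
    have key := coeff_sq_le hk ha r
    have hc : (0:ℝ) ≤ (x ^ (2*r) / (4 ^ r * (r.factorial : ℝ))) ^ 2 := by positivity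
    calc t r ^ 2
        = (kGamma k (ν + k) / kGamma k (↑r * k + ν + k)) ^ 2 *
            (x ^ (2*r) / (4 ^ r * (r.factorial : ℝ))) ^ 2 := by
          simp only [hts]; ring
      _ ≤ (kGamma k (ν - a + k) / kGamma k (↑r * k + (ν - a) + k) *
            (kGamma k (ν + a + k) / kGamma k (↑r * k + (ν + a) + k))) *
            (x ^ (2*r) / (4 ^ r * (r.factorial : ℝ))) ^ 2 :=
          mul_le_mul_of_nonneg_right key hc
      _ = u r * v r := by simp only [hus, hvs]; ring
  have main : (∑' r, t r) ≤ Real.sqrt ((∑' r, u r) * (∑' r, v r)) := by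
    apply Summable.tsum_le_of_sum_le hst
    intro s
    apply Real.le_sqrt_of_sq_le
    have h1 : (∑ i ∈ s, t i) ≤ ∑ i ∈ s, Real.sqrt (u i * v i) :=
      Finset.sum_le_sum fun i _ => Real.le_sqrt_of_sq_le (ht2 i)
    have h2 : (∑ i ∈ s, Real.sqrt (u i * v i)) ^ 2 ≤ (∑ i ∈ s, u i) * ∑ i ∈ s, v i :=
      Finset.sum_sq_le_sum_mul_sum_of_sq_eq_mul s (fun i _ => (hup i).le)
        (fun i _ => (hvp i).le)
        (fun i _ => Real.sq_sqrt (mul_nonneg (hup i).le (hvp i).le))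
    have h3 : (∑ i ∈ s, t i) ^ 2 ≤ (∑ i ∈ s, Real.sqrt (u i * v i)) ^ 2 :=
      pow_le_pow_left₀ (Finset.sum_nonneg fun i _ => (htp i).le) h1 2
    refine le_trans (le_trans h3 h2) (mul_le_mul ?_ ?_ ?_ ?_)
    · exact Summable.sum_le_tsum s (fun i _ => (hup i).le) hsu
    · exact Summable.sum_le_tsum s (fun i _ => (hvp i).le) hsv
    · exact Finset.sum_nonneg fun i _ => (hvp i).le
    · exact tsum_nonneg fun i => (hup i).le
  have hnn : 0 ≤ (∑' r, u r) * (∑' r, v r) :=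
    mul_nonneg (tsum_nonneg fun i => (hup i).le) (tsum_nonneg fun i => (hvp i).le)
  have hfin : (∑' r, t r) ^ 2 ≤ (∑' r, u r) * (∑' r, v r) := by
    calc (∑' r, t r) ^ 2 ≤ Real.sqrt ((∑' r, u r) * (∑' r, v r)) ^ 2 :=
          pow_le_pow_left₀ (tsum_nonneg fun i => (htp i).le) main 2
      _ = (∑' r, u r) * (∑' r, v r) := Real.sq_sqrt hnn
  linarith
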